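/- The functional μ₀ is a two-sided integral on the Hopf algebra 𝒩: for every x ∈ 𝒩, (μ₀ ⊗ id)(Δ(x)) = μ₀(x)·1 and (id ⊗ μ₀)(Δ(x)) = μ₀(x)·1. -/

import Mathlib

noncomputable section

open TensorProduct

/-- The quadratic form `q(x₀,x₁,x₂) = x₀²` on `ℝ³`. -/
def Nform : QuadraticForm ℝ (Fin 3 → ℝ) :=
  QuadraticMap.weightedSumSquares ℝ (fun i : Fin 3 => if i = 0 then (1 : ℝ) else 0)

/-- The algebra `𝒩 = ℤ/2 ⋉ Λ*ℝ²`, realized as the Clifford algebra of `Nform`. -/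
abbrev NA := CliffordAlgebra Nform

/-- The generator `K`. -/
def K : NA := CliffordAlgebra.ι Nform (Pi.single 0 1)

/-- The generator `θ`. -/
def θ : NA := CliffordAlgebra.ι Nform (Pi.single 1 1)

/-- The generator `θ̄`. -/
def θb : NA := CliffordAlgebra.ι Nform (Pi.single 2 1)

/-- `ρ := θ̄θ`. -/
def ρ : NA := θb * θ

lemma hKK : K * K = 1 := by
  rw [K, CliffordAlgebra.ι_sq_scalar]
  simp [Nform, QuadraticMap.weightedSumSquares_apply, Fin.sum_univ_three, Pi.single_apply]
  exact RingHom.map_one _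

lemma hθθ : θ * θ = 0 := by
  rw [θ, CliffordAlgebra.ι_sq_scalar]
  simp [Nform, QuadraticMap.weightedSumSquares_apply, Fin.sum_univ_three, Pi.single_apply]
  exact RingHom.map_zero _

lemma hbb : θb * θb = 0 := by
  rw [θb, CliffordAlgebra.ι_sq_scalar]
  simp [Nform, QuadraticMap.weightedSumSquares_apply, Fin.sum_univ_three, Pi.single_apply]
  exact RingHom.map_zero _

lemma anticomm (i j : Fin 3) (h : i ≠ j) :
    CliffordAlgebra.ι Nform (Pi.single i 1) * CliffordAlgebra.ι Nform (Pi.single j 1)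
      = -(CliffordAlgebra.ι Nform (Pi.single j 1) * CliffordAlgebra.ι Nform (Pi.single i 1)) := by
  have := CliffordAlgebra.ι_mul_ι_add_swap (Q := Nform) (Pi.single i 1) (Pi.single j 1)
  have hp : QuadraticMap.polar Nform (Pi.single i 1) (Pi.single j 1) = 0 := by
    fin_cases i <;> fin_cases j <;>
      simp_all [QuadraticMap.polar, Nform, QuadraticMap.weightedSumSquares_apply,
        Fin.sum_univ_three, Pi.single_apply]
  rw [hp] at this
  simp at this
  exact eq_neg_of_add_eq_zero_left this

lemma hθK : θ * K = -(K * θ) := anticomm 1 0 (by decide)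
lemma hbK : θb * K = -(K * θb) := anticomm 2 0 (by decide)
lemma hθb : θ * θb = -(θb * θ) := anticomm 1 2 (by decide)

lemma hKK' (x : NA) : K * (K * x) = x := by rw [← mul_assoc, hKK, one_mul]
lemma hθθ' (x : NA) : θ * (θ * x) = 0 := by rw [← mul_assoc, hθθ, zero_mul]
lemma hbb' (x : NA) : θb * (θb * x) = 0 := by rw [← mul_assoc, hbb, zero_mul]
lemma hθK' (x : NA) : θ * (K * x) = -(K * (θ * x)) := by
  rw [← mul_assoc, hθK, neg_mul, mul_assoc]
lemma hbK' (x : NA) : θb * (K * x) = -(K * (θb * x)) := by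
  rw [← mul_assoc, hbK, neg_mul, mul_assoc]
lemma hθb' (x : NA) : θ * (θb * x) = -(θb * (θ * x)) := by
  rw [← mul_assoc, hθb, neg_mul, mul_assoc]

/-- the spanning set -/
def gens : Set NA := {1, θ, θb, θb * θ, K, K * θ, K * θb, K * (θb * θ)}

/-- the span of the 8 basis monomials -/
def S : Submodule ℝ NA := Submodule.span ℝ gens

lemma mem_S_of_gen {x : NA} (h : x ∈ gens) : x ∈ S := Submodule.subset_span h

set_option maxHeartbeats 4000000 in
lemma mul_gen_mem : ∀ g ∈ ({K, θ, θb} : Set NA), ∀ x ∈ S, x * g ∈ S := by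
  rintro g hg x hx
  induction hx using Submodule.span_induction with
  | mem y hy =>
      simp only [gens, Set.mem_insert_iff, Set.mem_singleton_iff] at hy hg
      rcases hg with rfl | rfl | rfl <;>
        rcases hy with rfl | rfl | rfl | rfl | rfl | rfl | rfl | rfl <;>
          (try simp only [mul_assoc, hKK, hθθ, hbb, hθK, hbK, hθb, hKK', hθθ', hbb', hθK', hbK',
            hθb', one_mul, mul_one, zero_mul, mul_zero, mul_neg, neg_mul, neg_neg, neg_zero]) <;>
          first
            | exact zero_mem _
            | (refine mem_S_of_gen ?_; simp [gens]; done)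
            | (refine neg_mem (mem_S_of_gen ?_); simp [gens]; done)
  | zero => simp only [zero_mul]; exact zero_mem _
  | add a b _ _ ha hb => rw [add_mul]; exact add_mem ha hb
  | smul c a _ ha => rw [smul_mul_assoc]; exact Submodule.smul_mem _ _ ha

lemma S_top : S = ⊤ := by
  rw [eq_top_iff]
  rintro x -
  have key : ∀ y : NA, ∀ x ∈ S, x * y ∈ S := by
    intro y
    induction y using CliffordAlgebra.induction with
    | algebraMap r =>
        intro x hx
        rw [← Algebra.commutes r x, ← Algebra.smul_def]
        exact Submodule.smul_mem S r hx
    | ι v =>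
        intro x hx
        have hv : (CliffordAlgebra.ι Nform) v = v 0 • K + v 1 • θ + v 2 • θb := by
          have h2 : v = v 0 • (Pi.single 0 1 : Fin 3 → ℝ) + v 1 • (Pi.single 1 1 : Fin 3 → ℝ)
              + v 2 • (Pi.single 2 1 : Fin 3 → ℝ) := by
            ext j; fin_cases j <;> simp [Pi.single_apply]
          rw [K, θ, θb, ← map_smul, ← map_smul, ← map_smul, ← map_add, ← map_add, ← h2]
        rw [hv, mul_add, mul_add, mul_smul_comm, mul_smul_comm, mul_smul_comm]
        refine add_mem (add_mem ?_ ?_) ?_ <;>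
          exact Submodule.smul_mem _ _ (mul_gen_mem _ (by simp) x hx)
    | mul a b ha hb =>
        intro x hx
        rw [← mul_assoc]
        exact hb _ (ha _ hx)
    | add a b ha hb =>
        intro x hx
        rw [mul_add]
        exact add_mem (ha _ hx) (hb _ hx)
  have := key x 1 (mem_S_of_gen (by simp [gens]; done))
  rwa [one_mul] at this

set_option maxHeartbeats 1000000 in
lemma aux_mem
    (Δ : NA →ₐ[ℝ] NA ⊗[ℝ] NA)
    (hΔK : Δ K = K ⊗ₜ[ℝ] K)
    (hΔθ : Δ θ = θ ⊗ₜ[ℝ] 1 + K ⊗ₜ[ℝ] θ)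
    (hΔθb : Δ θb = θb ⊗ₜ[ℝ] 1 + K ⊗ₜ[ℝ] θb)
    (μ₀ : NA →ₗ[ℝ] ℝ)
    (hμ1 : μ₀ 1 = 0) (hμθ : μ₀ θ = 0) (hμθb : μ₀ θb = 0) (hμρ' : μ₀ (θb * θ) = 1)
    (hμK : μ₀ K = 0) (hμKθ : μ₀ (K * θ) = 0) (hμKθb : μ₀ (K * θb) = 0)
    (hμKρ' : μ₀ (K * (θb * θ)) = 0) :
    ∀ y ∈ gens,
      (TensorProduct.lid ℝ NA) (LinearMap.rTensor NA μ₀ (Δ y)) = μ₀ y • (1 : NA) ∧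
      (TensorProduct.rid ℝ NA) (LinearMap.lTensor NA μ₀ (Δ y)) = μ₀ y • (1 : NA) := by
  intro y hy
  simp only [gens, Set.mem_insert_iff, Set.mem_singleton_iff] at hy
  rcases hy with rfl | rfl | rfl | rfl | rfl | rfl | rfl | rfl <;>
    constructor <;>
    simp only [map_one, map_mul, hΔK, hΔθ, hΔθb, Algebra.TensorProduct.one_def,
      Algebra.TensorProduct.tmul_mul_tmul, add_mul, mul_add, map_add,
      LinearMap.rTensor_tmul, LinearMap.lTensor_tmul, TensorProduct.lid_tmul,
      TensorProduct.rid_tmul] <;>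
    simp [hKK, hθθ, hbb, hθK, hbK, hθb, hKK', hθθ', hbb', hθK', hbK', hθb', map_neg,
      hμ1, hμθ, hμθb, hμρ', hμK, hμKθ, hμKθb, hμKρ', mul_assoc]

/-- the functional `μ₀` (the linear functional taking the value `1` on the
basis monomial `ρ` and `0` on the other seven basis monomials) is a two-sided integral
on the Hopf algebra `𝒩`: for every `x ∈ 𝒩` one has `(μ₀ ⊗ id)(Δ(x)) = μ₀(x)·1` and
`(id ⊗ μ₀)(Δ(x)) = μ₀(x)·1`.  Here `Δ` is the coproduct of `𝒩`, i.e. the (unique)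
algebra homomorphism with `Δ(K) = K⊗K`, `Δ(θ) = θ⊗1 + K⊗θ`, `Δ(θ̄) = θ̄⊗1 + K⊗θ̄`. -/
theorem stmt2
    (Δ : NA →ₐ[ℝ] NA ⊗[ℝ] NA)
    (hΔK : Δ K = K ⊗ₜ[ℝ] K)
    (hΔθ : Δ θ = θ ⊗ₜ[ℝ] 1 + K ⊗ₜ[ℝ] θ)
    (hΔθb : Δ θb = θb ⊗ₜ[ℝ] 1 + K ⊗ₜ[ℝ] θb)
    (μ₀ : NA →ₗ[ℝ] ℝ)
    (hμ1 : μ₀ 1 = 0) (hμθ : μ₀ θ = 0) (hμθb : μ₀ θb = 0) (hμρ : μ₀ ρ = 1)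
    (hμK : μ₀ K = 0) (hμKθ : μ₀ (K * θ) = 0) (hμKθb : μ₀ (K * θb) = 0)
    (hμKρ : μ₀ (K * ρ) = 0) :
    ∀ x : NA,
      (TensorProduct.lid ℝ NA) (LinearMap.rTensor NA μ₀ (Δ x)) = μ₀ x • (1 : NA) ∧
      (TensorProduct.rid ℝ NA) (LinearMap.lTensor NA μ₀ (Δ x)) = μ₀ x • (1 : NA) := by
  intro x
  have hμρ' : μ₀ (θb * θ) = 1 := hμρ
  have hμKρ' : μ₀ (K * (θb * θ)) = 0 := by rw [show K * (θb * θ) = K * ρ from rfl]; exact hμKρ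
  have hx : x ∈ S := by rw [S_top]; trivial
  induction hx using Submodule.span_induction with
  | mem y hy =>
      exact aux_mem Δ hΔK hΔθ hΔθb μ₀ hμ1 hμθ hμθb hμρ' hμK hμKθ hμKθb hμKρ' y hy
  | zero =>
      constructor <;>
        rw [map_zero, LinearMap.map_zero, LinearEquiv.map_zero, LinearMap.map_zero, zero_smul]
  | add a b _ _ iha ihb =>
      constructor
      · rw [map_add, map_add, map_add, iha.1, ihb.1, ← add_smul, ← map_add]
      · rw [map_add, map_add, map_add, iha.2, ihb.2, ← add_smul, ← map_add]
  | smul c a _ iha =>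
      constructor
      · rw [map_smul, map_smul, map_smul, iha.1, map_smul, smul_assoc]
      · rw [map_smul, map_smul, map_smul, iha.2, map_smul, smul_assoc]
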